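/- arXiv:1504.03129 — 2 statements merged into one kernel-verified Lean document; each statement's English description precedes it below -/
import Mathlib

section
/- Let V ⊂ Z^{|V|} be a positive circular subset such that v·v ≤ -3 for every v ∈ V, whose Wu element W = ∑_{v∈V} v satisfies W·W = -|V|, admitting an adapted canonical basis for which the coefficient map v ↦ e_v is injective. Then v·v = -3 for every v ∈ V. -/
open Finset

/-- The standard negative definite bilinear form on `ℤ^N`:
`x·y = -∑ i, x i * y i`. -/
def negForm (N : ℕ) (u v : Fin N → ℤ) : ℤ := -∑ i, u i * v i

/-- A canonical basis of `ℤ^N`: a set of `N` vectors with `e·e = -1` and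
distinct elements pairwise orthogonal. -/
def IsCanonicalBasis (N : ℕ) (E : Finset (Fin N → ℤ)) : Prop :=
  E.card = N ∧ (∀ e ∈ E, negForm N e e = -1) ∧
    ∀ e ∈ E, ∀ f ∈ E, e ≠ f → negForm N e f = 0

/-- The equivalence relation on `ℤ^N` generated by `u ~ v` iff
`u, v ∈ V` and `u·v ≠ 0`. -/
def Conn (N : ℕ) (V : Finset (Fin N → ℤ)) : (Fin N → ℤ) → (Fin N → ℤ) → Prop :=
  Relation.EqvGen fun u v => u ∈ V ∧ v ∈ V ∧ negForm N u v ≠ 0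

open scoped Classical in
/-- The connected component of `v` in `V`. -/
noncomputable def compOf (N : ℕ) (V : Finset (Fin N → ℤ)) (v : Fin N → ℤ) :
    Finset (Fin N → ℤ) :=
  V.filter fun u => Conn N V u v

/-- A circular subset of `ℤ^N`. -/
def IsCircular (N : ℕ) (V : Finset (Fin N → ℤ)) : Prop :=
  (∀ v ∈ V, 3 ≤ (compOf N V v).card) ∧
  (∀ u ∈ V, ∀ v ∈ V, u ≠ v →
    negForm N u v = -1 ∨ negForm N u v = 0 ∨ negForm N u v = 1) ∧
  (∀ v ∈ V,
    (V.filter fun u => u ≠ v ∧ (negForm N u v = 1 ∨ negForm N u v = -1)).card = 2)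

/-- `E` is a canonical basis adapted to `V`:  `∑_{v ∈ V} v = -∑_{e ∈ E} e`. -/
def IsAdaptedBasis (N : ℕ) (E V : Finset (Fin N → ℤ)) : Prop :=
  IsCanonicalBasis N E ∧ (∑ v ∈ V, v) = -∑ e ∈ E, e

open scoped Classical in
/-- A semipositive circular subset: each connected component contains exactly one
(unordered) pair of distinct vectors `u, v` with `u·v = -1`. -/
def IsSemipositive (N : ℕ) (V : Finset (Fin N → ℤ)) : Prop :=
  IsCircular N V ∧ ∀ v₀ ∈ V,
    (((compOf N V v₀) ×ˢ (compOf N V v₀)).filter fun p =>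
      p.1 ≠ p.2 ∧ negForm N p.1 p.2 = -1).card = 2

/-- A positive circular subset: `u·v ≥ 0` for all distinct `u, v ∈ V`. -/
def IsPositive (N : ℕ) (V : Finset (Fin N → ℤ)) : Prop :=
  IsCircular N V ∧ ∀ u ∈ V, ∀ v ∈ V, u ≠ v → 0 ≤ negForm N u v

/-- A single blowup of a string of nonnegative integers. -/
inductive IsBlowup : List ℕ → List ℕ → Prop
  | left (a b : ℕ) (m : List ℕ) :
      IsBlowup (a :: (m ++ [b])) (1 :: (a + 1) :: (m ++ [b + 1]))
  | middle (a b : ℕ) (p s : List ℕ) :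
      IsBlowup (p ++ a :: b :: s) (p ++ (a + 1) :: 1 :: (b + 1) :: s)
  | right (a b : ℕ) (m : List ℕ) :
      IsBlowup (a :: (m ++ [b])) ((a + 1) :: (m ++ [b + 1, 1]))

/-- An iterated blowup of `(0,0)`. -/
def IsIteratedBlowup (s : List ℕ) : Prop :=
  Relation.ReflTransGen IsBlowup [0, 0] s

/-- A `(-2)`-expansion of a string of negative integers. -/
inductive IsNeg2Expansion : List ℤ → List ℤ → Prop
  | first (l : List ℤ) (a : ℤ) :
      IsNeg2Expansion (-2 :: (l ++ [a])) (-2 :: -2 :: (l ++ [a - 1]))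
  | second (a : ℤ) (l : List ℤ) :
      IsNeg2Expansion (-2 :: a :: l) (-2 :: (a - 1) :: (l ++ [-2]))

/-- A cyclic listing of (the elements of) a connected component `C` of a circular
subset: a cyclically indexed enumeration of `C` in which consecutive elements
pair to `±1`. -/
def IsCyclicListing (N : ℕ) (C : Finset (Fin N → ℤ)) (m : ℕ)
    (w : ZMod m → (Fin N → ℤ)) : Prop :=
  C.card = m ∧ Function.Injective w ∧ (∀ i, w i ∈ C) ∧ (∀ c ∈ C, ∃ i, w i = c) ∧
    ∀ i : ZMod m, negForm N (w i) (w (i + 1)) = 1 ∨ negForm N (w i) (w (i + 1)) = -1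

/-- The index in the cyclic string at which the `i`-th block starts. -/
def blockStart {t : ℕ} (y : Fin t → ℕ) (i : Fin t) : ℕ := ∑ i' ∈ Finset.Iio i, y i'

/-- The string of squares `(-x₁-2, -2,…,-2, …, -xₜ-2, -2,…,-2)` of the lattice
`Λ_Γ`, as a function on `Fin n` (where `n = ∑ yᵢ`). -/
def sqOf {t : ℕ} (x y : Fin t → ℕ) (n : ℕ) (j : Fin n) : ℤ :=
  -2 - ∑ i : Fin t, if (j : ℕ) = blockStart y i then (x i : ℤ) else 0

/-- The Gram matrix of the lattice `Λ_Γ`: diagonal given by `sq`, consecutive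
vertices pair to `1`, the last and first vertices pair to `(-1)^d`, all other
pairs are orthogonal. -/
def gramOf (n : ℕ) (sq : Fin n → ℤ) (d : ℕ) (i j : Fin n) : ℤ :=
  if i = j then sq i
  else if (j : ℕ) = (i : ℕ) + 1 ∨ (i : ℕ) = (j : ℕ) + 1 then 1
  else if ((i : ℕ) = 0 ∧ (j : ℕ) = n - 1) ∨ ((j : ℕ) = 0 ∧ (i : ℕ) = n - 1)
    then (-1) ^ d
  else 0


lemma negForm_sum_left' {N : ℕ} {α : Type*} (s : Finset α) (f : α → Fin N → ℤ)
    (w : Fin N → ℤ) :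
    negForm N (∑ v ∈ s, f v) w = ∑ v ∈ s, negForm N (f v) w := by
  simp only [negForm, Finset.sum_apply, Finset.sum_mul, ← Finset.sum_neg_distrib]
  rw [Finset.sum_comm]

lemma negForm_sum_right' {N : ℕ} {α : Type*} (s : Finset α) (f : α → Fin N → ℤ)
    (w : Fin N → ℤ) :
    negForm N w (∑ v ∈ s, f v) = ∑ v ∈ s, negForm N w (f v) := by
  simp only [negForm, Finset.sum_apply, Finset.mul_sum, ← Finset.sum_neg_distrib]
  rw [Finset.sum_comm]

/-- a positive circular subset `V ⊂ ℤ^{|V|}` with all squares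
`≤ -3`, `W·W = -|V|`, and an adapted canonical basis with injective coefficient
map has all squares equal to `-3`. -/
theorem stmt_14 (N : ℕ) (V E : Finset (Fin N → ℤ)) (hN : N = V.card)
    (hpos : IsPositive N V)
    (hsq : ∀ v ∈ V, negForm N v v ≤ -3)
    (hW : negForm N (∑ v ∈ V, v) (∑ v ∈ V, v) = -(V.card : ℤ))
    (hE : IsAdaptedBasis N E V)
    (hinj : ∀ v ∈ V, ∀ v' ∈ V, ∀ e ∈ E,
      (negForm N v e = -1 ∨ negForm N v e = 2) →
      (negForm N v' e = -1 ∨ negForm N v' e = 2) → v = v') :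
    ∀ v ∈ V, negForm N v v = -3 := by
    classical
  obtain ⟨⟨-, hpm, hcard2⟩, hpos'⟩ := hpos
  have key : ∀ v ∈ V, ∑ u ∈ V, negForm N u v = negForm N v v + 2 := by
    intro v hv
    rw [← Finset.add_sum_erase _ _ hv]
    have h1 : ∀ u ∈ V.erase v,
        negForm N u v = (if negForm N u v = 1 then (1:ℤ) else 0) := by
      intro u hu
      obtain ⟨hne, huV⟩ := Finset.mem_erase.mp hu
      rcases hpm u huV v hv hne with h | h | h
      · exfalso; have := hpos' u huV v hv hne; omega
      · simp [h]
      · simp [h]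
    rw [Finset.sum_congr rfl h1, Finset.sum_boole]
    have hset : (V.erase v).filter (fun u => negForm N u v = 1)
        = V.filter fun u => u ≠ v ∧ (negForm N u v = 1 ∨ negForm N u v = -1) := by
      ext u
      simp only [Finset.mem_filter, Finset.mem_erase]
      constructor
      · rintro ⟨⟨hne, huV⟩, h⟩; exact ⟨huV, hne, Or.inl h⟩
      · rintro ⟨huV, hne, h | h⟩
        · exact ⟨⟨hne, huV⟩, h⟩
        · exact absurd (hpos' u huV v hv hne) (by omega)
    rw [hset]
    simp [hcard2 v hv]
  have htot : -(V.card : ℤ) = ∑ v ∈ V, (negForm N v v + 2) := by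
    rw [← hW, negForm_sum_left']
    refine Finset.sum_congr rfl fun v hv => ?_
    rw [negForm_sum_right']
    have hsymm : ∀ u ∈ V, negForm N v u = negForm N u v := by
      intro u _; simp [negForm, mul_comm]
    rw [Finset.sum_congr rfl hsymm, key v hv]
  have hzero : ∑ v ∈ V, (negForm N v v + 3) = 0 := by
    have h3 : ∑ v ∈ V, (negForm N v v + 3)
        = ∑ v ∈ V, (negForm N v v + 2) + V.card := by
      simp [Finset.sum_add_distrib]; ring
    omega
  intro v hv
  have hle : ∀ u ∈ V, negForm N u u + 3 ≤ 0 := fun u hu => by have := hsq u hu; omega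
  have := (Finset.sum_eq_zero_iff_of_nonpos hle).mp hzero v hv
  omega
end

section
/- Let u, v ∈ Z with u·v = 1. Then, up to swapping u and v, one of the following holds: (1) |F_u ∩ F_v| = 1 and there are five distinct elements f_1,…,f_5 ∈ F such that u = f_1 - f_2 - f_3 and v = f_3 - f_4 - f_5; (2) |F_u ∩ F_v| = 3 and there are three distinct elements f_1, f_2, f_3 ∈ F such that u = f_1 - f_2 - f_3 and v = f_3 - f_1 - f_2. Moreover, if u and v belong to a connected component of Z of cardinality greater than 3, then case (1) holds. -/
open Finset

lemma negForm_comm (N : ℕ) (u v : Fin N → ℤ) : negForm N u v = negForm N v u := by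
  unfold negForm; congr 1; exact Finset.sum_congr rfl fun i _ => mul_comm _ _

lemma negForm_add_right (N : ℕ) (u v w : Fin N → ℤ) :
    negForm N u (v + w) = negForm N u v + negForm N u w := by
  unfold negForm
  rw [← neg_add, ← Finset.sum_add_distrib]
  congr 1; exact Finset.sum_congr rfl fun i _ => by simp [mul_add]

lemma negForm_sub_right (N : ℕ) (u v w : Fin N → ℤ) :
    negForm N u (v - w) = negForm N u v - negForm N u w := by
  unfold negForm
  rw [← neg_sub', ← Finset.sum_sub_distrib]
  congr 1; exact Finset.sum_congr rfl fun i _ => mul_sub _ _ _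

lemma negForm_sub_left (N : ℕ) (u v w : Fin N → ℤ) :
    negForm N (u - v) w = negForm N u w - negForm N v w := by
  rw [negForm_comm, negForm_sub_right, negForm_comm N w u, negForm_comm N w v]

lemma basis_pair {N : ℕ} {F : Finset (Fin N → ℤ)} (hE : IsCanonicalBasis N F)
    {e f : Fin N → ℤ} (he : e ∈ F) (hf : f ∈ F) :
    negForm N e f = if e = f then -1 else 0 := by
  split_ifs with h
  · subst h; exact hE.2.1 e he
  · exact hE.2.2 e he f hf h

lemma z_pair {N : ℕ} {F : Finset (Fin N → ℤ)} (hE : IsCanonicalBasis N F)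
    {f1 f2 f3 f : Fin N → ℤ} (h1 : f1 ∈ F) (h2 : f2 ∈ F) (h3 : f3 ∈ F) (hf : f ∈ F) :
    negForm N (f1 - f2 - f3) f =
      (if f1 = f then (-1 : ℤ) else 0) + (if f2 = f then 1 else 0) +
        (if f3 = f then 1 else 0) := by
  rw [negForm_sub_left, negForm_sub_left, basis_pair hE h1 hf, basis_pair hE h2 hf,
    basis_pair hE h3 hf]
  split_ifs <;> ring

lemma z_pair_ne {N : ℕ} {F : Finset (Fin N → ℤ)} (hE : IsCanonicalBasis N F)
    {f1 f2 f3 f : Fin N → ℤ} (h1 : f1 ∈ F) (h2 : f2 ∈ F) (h3 : f3 ∈ F) (hf : f ∈ F)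
    (h12 : f1 ≠ f2) (h13 : f1 ≠ f3) (h23 : f2 ≠ f3) :
    negForm N (f1 - f2 - f3) f ≠ 0 ↔ (f = f1 ∨ f = f2 ∨ f = f3) := by
  rw [z_pair hE h1 h2 h3 hf]
  by_cases e1 : f1 = f <;> by_cases e2 : f2 = f <;> by_cases e3 : f3 = f <;>
    simp_all [eq_comm]

lemma zz_pair {N : ℕ} {F : Finset (Fin N → ℤ)} (hE : IsCanonicalBasis N F)
    {f1 f2 f3 g1 g2 g3 : Fin N → ℤ} (h1 : f1 ∈ F) (h2 : f2 ∈ F) (h3 : f3 ∈ F)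
    (k1 : g1 ∈ F) (k2 : g2 ∈ F) (k3 : g3 ∈ F) :
    negForm N (f1 - f2 - f3) (g1 - g2 - g3) =
      -(if f1 = g1 then (1:ℤ) else 0) + (if f1 = g2 then 1 else 0) + (if f1 = g3 then 1 else 0)
      + (if f2 = g1 then 1 else 0) - (if f2 = g2 then 1 else 0) - (if f2 = g3 then 1 else 0)
      + (if f3 = g1 then 1 else 0) - (if f3 = g2 then 1 else 0) - (if f3 = g3 then 1 else 0) := by
  rw [negForm_sub_right, negForm_sub_right,
    z_pair hE h1 h2 h3 k1, z_pair hE h1 h2 h3 k2, z_pair hE h1 h2 h3 k3]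
  split_ifs <;> ring

lemma caseC1 {N : ℕ} {F : Finset (Fin N → ℤ)} (hE : IsCanonicalBasis N F)
    {x1 x2 x3 x4 x5 : Fin N → ℤ}
    (m1 : x1 ∈ F) (m2 : x2 ∈ F) (m3 : x3 ∈ F) (m4 : x4 ∈ F) (m5 : x5 ∈ F)
    (d12 : x1 ≠ x2) (d13 : x1 ≠ x3) (d14 : x1 ≠ x4) (d15 : x1 ≠ x5)
    (d23 : x2 ≠ x3) (d24 : x2 ≠ x4) (d25 : x2 ≠ x5)
    (d34 : x3 ≠ x4) (d35 : x3 ≠ x5) (d45 : x4 ≠ x5)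
    {p q : Fin N → ℤ} (hp : p = x1 - x2 - x3) (hq : q = x3 - x4 - x5) :
    (F.filter fun f => negForm N p f ≠ 0 ∧ negForm N q f ≠ 0).card = 1 ∧
      ∃ f : Fin 5 → (Fin N → ℤ), Function.Injective f ∧ (∀ j, f j ∈ F) ∧
        p = f 0 - f 1 - f 2 ∧ q = f 2 - f 3 - f 4 := by
  constructor
  · have : (F.filter fun f => negForm N p f ≠ 0 ∧ negForm N q f ≠ 0) = {x3} := by
      ext f
      simp only [Finset.mem_filter, Finset.mem_singleton]
      constructor
      · rintro ⟨hfF, hpf, hqf⟩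
        rw [hp, z_pair_ne hE m1 m2 m3 hfF d12 d13 d23] at hpf
        rw [hq, z_pair_ne hE m3 m4 m5 hfF d34 d35 d45] at hqf
        rcases hpf with rfl | rfl | rfl <;> rcases hqf with h | h | h <;>
          first | rfl | (exact absurd h (by assumption)) |
            (exact absurd h.symm (by assumption))
      · rintro rfl
        refine ⟨m3, ?_, ?_⟩
        · rw [hp, z_pair_ne hE m1 m2 m3 m3 d12 d13 d23]; tauto
        · rw [hq, z_pair_ne hE m3 m4 m5 m3 d34 d35 d45]; tauto
    rw [this, Finset.card_singleton]
  · refine ⟨![x1, x2, x3, x4, x5], ?_, ?_, ?_, ?_⟩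
    · intro a b hab
      fin_cases a <;> fin_cases b <;> simp_all <;>
        first | rfl | (exact absurd hab (by assumption)) |
          (exact absurd hab.symm (by assumption))
    · intro j; fin_cases j <;> simpa
    · simpa using hp
    · simpa using hq

lemma caseC3 {N : ℕ} {F : Finset (Fin N → ℤ)} (hE : IsCanonicalBasis N F)
    {x1 x2 x3 : Fin N → ℤ}
    (m1 : x1 ∈ F) (m2 : x2 ∈ F) (m3 : x3 ∈ F)
    (d12 : x1 ≠ x2) (d13 : x1 ≠ x3) (d23 : x2 ≠ x3)
    {p q : Fin N → ℤ} (hp : p = x1 - x2 - x3) (hq : q = x3 - x1 - x2) :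
    (F.filter fun f => negForm N p f ≠ 0 ∧ negForm N q f ≠ 0).card = 3 ∧
      ∃ f : Fin 3 → (Fin N → ℤ), Function.Injective f ∧ (∀ j, f j ∈ F) ∧
        p = f 0 - f 1 - f 2 ∧ q = f 2 - f 0 - f 1 := by
  constructor
  · have : (F.filter fun f => negForm N p f ≠ 0 ∧ negForm N q f ≠ 0) = {x1, x2, x3} := by
      ext f
      simp only [Finset.mem_filter, Finset.mem_insert, Finset.mem_singleton]
      constructor
      · rintro ⟨hfF, hpf, _⟩
        rw [hp, z_pair_ne hE m1 m2 m3 hfF d12 d13 d23] at hpf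
        exact hpf
      · rintro (rfl | rfl | rfl)
        · exact ⟨m1, by rw [hp, z_pair_ne hE m1 m2 m3 m1 d12 d13 d23]; tauto,
            by rw [hq, z_pair_ne hE m3 m1 m2 m1 (Ne.symm d13) d23.symm.symm.symm d12]; tauto⟩
        · exact ⟨m2, by rw [hp, z_pair_ne hE m1 m2 m3 m2 d12 d13 d23]; tauto,
            by rw [hq, z_pair_ne hE m3 m1 m2 m2 (Ne.symm d13) (Ne.symm d23) d12]; tauto⟩
        · exact ⟨m3, by rw [hp, z_pair_ne hE m1 m2 m3 m3 d12 d13 d23]; tauto,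
            by rw [hq, z_pair_ne hE m3 m1 m2 m3 (Ne.symm d13) (Ne.symm d23) d12]; tauto⟩
    rw [this]
    rw [Finset.card_insert_of_notMem (by simp [d12, d13]),
      Finset.card_insert_of_notMem (by simp [d23]), Finset.card_singleton]
  · refine ⟨![x1, x2, x3], ?_, ?_, ?_, ?_⟩
    · intro a b hab
      fin_cases a <;> fin_cases b <;> simp_all <;>
        first | rfl | (exact absurd hab (by assumption)) |
          (exact absurd hab.symm (by assumption))
    · intro j; fin_cases j <;> simpa
    · simpa using hp
    · simpa using hq

lemma z_pair_range {N : ℕ} {F : Finset (Fin N → ℤ)} (hE : IsCanonicalBasis N F)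
    {f1 f2 f3 f : Fin N → ℤ} (h1 : f1 ∈ F) (h2 : f2 ∈ F) (h3 : f3 ∈ F) (hf : f ∈ F)
    (h12 : f1 ≠ f2) (h13 : f1 ≠ f3) (h23 : f2 ≠ f3) :
    negForm N (f1 - f2 - f3) f = -1 ∨ negForm N (f1 - f2 - f3) f = 0 ∨
      negForm N (f1 - f2 - f3) f = 1 := by
  rw [z_pair hE h1 h2 h3 hf]
  by_cases e1 : f1 = f <;> by_cases e2 : f2 = f <;> by_cases e3 : f3 = f <;>
    simp_all

lemma comp_small {N : ℕ} {Z F : Finset (Fin N → ℤ)}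
    (hpos : IsPositive N Z) (hE : IsCanonicalBasis N F)
    (hform : ∀ z ∈ Z, ∃ f1 ∈ F, ∃ f2 ∈ F, ∃ f3 ∈ F,
      f1 ≠ f2 ∧ f1 ≠ f3 ∧ f2 ≠ f3 ∧ z = f1 - f2 - f3)
    (hhit1 : ∀ f ∈ F, (Z.filter fun z => negForm N z f = -1).card = 1)
    (hhit2 : ∀ f ∈ F, (Z.filter fun z => negForm N z f = 1).card = 2)
    {a b c : Fin N → ℤ} (ma : a ∈ F) (mb : b ∈ F) (mc : c ∈ F)
    (dab : a ≠ b) (dac : a ≠ c) (dbc : b ≠ c)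
    {p q : Fin N → ℤ} (hpZ : p ∈ Z) (hqZ : q ∈ Z)
    (hp : p = a - b - c) (hq : q = c - a - b) (w : Fin N → ℤ)
    (hw : w = p ∨ w = q) :
    (compOf N Z w).card ≤ 3 := by
  classical
  have hpb : negForm N p b = 1 := by
    rw [hp, z_pair hE ma mb mc mb]
    simp [dab, Ne.symm dbc]
  have hqb : negForm N q b = 1 := by
    rw [hq, z_pair hE mc ma mb mb]
    simp [dab, Ne.symm dbc]
  have hpq : p ≠ q := by
    intro h
    have h1 : negForm N p q = 1 := by
      rw [hp, hq, zz_pair hE ma mb mc mc ma mb]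
      simp [dab, dac, dbc, Ne.symm dac, Ne.symm dab, Ne.symm dbc]
    have h2 : negForm N p p = -3 := by
      rw [hp, zz_pair hE ma mb mc ma mb mc]
      simp [dab, dac, dbc, Ne.symm dac, Ne.symm dab, Ne.symm dbc]
    rw [← h] at h1
    omega
  obtain ⟨zb, hzb⟩ : ∃ zb, (Z.filter fun z => negForm N z b = -1) = {zb} :=
    Finset.card_eq_one.mp (hhit1 b mb)
  have hzbZ : zb ∈ Z := by
    have := Finset.mem_singleton_self zb
    rw [← hzb, Finset.mem_filter] at this; exact this.1
  have hzbb : negForm N zb b = -1 := by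
    have := Finset.mem_singleton_self zb
    rw [← hzb, Finset.mem_filter] at this; exact this.2
  have hpzb : p ≠ zb := fun h => by rw [h, hzbb] at hpb; omega
  have hqzb : q ≠ zb := fun h => by rw [h, hzbb] at hqb; omega
  have hfil1 : (Z.filter fun z => negForm N z b = 1) = {p, q} := by
    refine (Finset.eq_of_subset_of_card_le ?_ ?_).symm
    · intro x hx
      rcases Finset.mem_insert.mp hx with rfl | hx
      · exact Finset.mem_filter.mpr ⟨hpZ, hpb⟩
      · rw [Finset.mem_singleton] at hx; subst hx
        exact Finset.mem_filter.mpr ⟨hqZ, hqb⟩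
    · rw [hhit2 b mb, Finset.card_insert_of_notMem (by simpa using hpq),
        Finset.card_singleton]
  have hsum : ∀ y : Fin N → ℤ, negForm N y p + negForm N y q = -2 * negForm N y b := by
    intro y
    rw [hp, hq, negForm_sub_right, negForm_sub_right, negForm_sub_right, negForm_sub_right]
    ring
  have hzbp : negForm N zb p = 1 ∧ negForm N zb q = 1 := by
    have h2 := hsum zb
    rw [hzbb] at h2
    have hc1 := hpos.1.2.1 zb hzbZ p hpZ (Ne.symm hpzb)
    have hc2 := hpos.1.2.1 zb hzbZ q hqZ (Ne.symm hqzb)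
    constructor <;> omega
  -- any y of Z outside {p,q,zb} is orthogonal to p and q
  have hout : ∀ y ∈ Z, y ≠ p → y ≠ q → y ≠ zb →
      negForm N y p = 0 ∧ negForm N y q = 0 := by
    intro y hyZ hyp hyq hyzb
    have hyb : negForm N y b = 0 := by
      obtain ⟨h1, m1, h2, m2, h3, m3, d12, d13, d23, hy⟩ := hform y hyZ
      have hrange := z_pair_range hE m1 m2 m3 mb d12 d13 d23
      rw [← hy] at hrange
      have hne1 : negForm N y b ≠ -1 := fun h => hyzb <| Finset.mem_singleton.mp <|
        hzb ▸ Finset.mem_filter.mpr ⟨hyZ, h⟩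
      have hne2 : negForm N y b ≠ 1 := by
        intro h
        have : y ∈ ({p, q} : Finset (Fin N → ℤ)) :=
          hfil1 ▸ Finset.mem_filter.mpr ⟨hyZ, h⟩
        rcases Finset.mem_insert.mp this with h' | h'
        · exact hyp h'
        · exact hyq (Finset.mem_singleton.mp h')
      omega
    have h2 := hsum y
    rw [hyb] at h2
    have g1 := hpos.2 y hyZ p hpZ hyp
    have g2 := hpos.2 y hyZ q hqZ hyq
    omega
  have hSclosed : ∀ x, (x = p ∨ x = q ∨ x = zb) → ∀ y ∈ Z, negForm N x y ≠ 0 →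
      (y = p ∨ y = q ∨ y = zb) := by
    intro x hx y hyZ hxy
    by_cases hyp : y = p
    · exact Or.inl hyp
    by_cases hyq : y = q
    · exact Or.inr (Or.inl hyq)
    by_cases hyzb : y = zb
    · exact Or.inr (Or.inr hyzb)
    exfalso
    rcases hx with h | h | h
    · have := (hout y hyZ hyp hyq hyzb).1
      rw [h, negForm_comm] at hxy
      exact hxy this
    · have := (hout y hyZ hyp hyq hyzb).2
      rw [h, negForm_comm] at hxy
      exact hxy this
    · rw [h] at hxy
      have hfil : (Z.filter fun u => u ≠ zb ∧ (negForm N u zb = 1 ∨ negForm N u zb = -1))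
          = {p, q} := by
        refine (Finset.eq_of_subset_of_card_le ?_ ?_).symm
        · intro x hx
          rcases Finset.mem_insert.mp hx with rfl | hx
          · exact Finset.mem_filter.mpr ⟨hpZ, hpzb,
              Or.inl (by rw [negForm_comm]; exact hzbp.1)⟩
          · rw [Finset.mem_singleton] at hx; subst hx
            exact Finset.mem_filter.mpr ⟨hqZ, hqzb,
              Or.inl (by rw [negForm_comm]; exact hzbp.2)⟩
        · rw [hpos.1.2.2 zb hzbZ, Finset.card_insert_of_notMem (by simpa using hpq),
            Finset.card_singleton]
      have hyf : y ∈ (Z.filter fun u => u ≠ zb ∧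
          (negForm N u zb = 1 ∨ negForm N u zb = -1)) := by
        refine Finset.mem_filter.mpr ⟨hyZ, hyzb, ?_⟩
        have := hpos.1.2.1 zb hzbZ y hyZ (fun h => hyzb h.symm)
        rw [negForm_comm]
        omega
      rw [hfil] at hyf
      rcases Finset.mem_insert.mp hyf with h' | h'
      · exact hyp h'
      · exact hyq (Finset.mem_singleton.mp h')
  have hwS : w = p ∨ w = q ∨ w = zb := by tauto
  have hconn : ∀ x y, Conn N Z x y →
      ((x = p ∨ x = q ∨ x = zb) ↔ (y = p ∨ y = q ∨ y = zb)) := by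
    intro x y h
    induction h with
    | rel x y hxy => exact ⟨fun hx => hSclosed x hx y hxy.2.1 hxy.2.2,
        fun hy => hSclosed y hy x hxy.1 (by rw [negForm_comm]; exact hxy.2.2)⟩
    | refl x => exact Iff.rfl
    | symm x y _ ih => exact ih.symm
    | trans x y z _ _ ih1 ih2 => exact ih1.trans ih2
  have hsub : compOf N Z w ⊆ {p, q, zb} := by
    intro x hx
    rw [compOf, Finset.mem_filter] at hx
    have := (hconn x w hx.2).mpr hwS
    simp only [Finset.mem_insert, Finset.mem_singleton]
    exact this
  calc (compOf N Z w).card ≤ ({p, q, zb} : Finset (Fin N → ℤ)).card :=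
        Finset.card_le_card hsub
    _ ≤ 3 := by
      apply le_trans (Finset.card_insert_le _ _)
      apply Nat.succ_le_succ
      apply le_trans (Finset.card_insert_le _ _)
      simp

/-- if `u, v ∈ Z` satisfy `u·v = 1` then, up to swapping `u` and
`v`, either `|F_u ∩ F_v| = 1` and `u = f₁-f₂-f₃`, `v = f₃-f₄-f₅` for five
distinct elements of `F`, or `|F_u ∩ F_v| = 3` and `u = f₁-f₂-f₃`,
`v = f₃-f₁-f₂`; if `u,v` lie in a connected component of cardinality `> 3`,
the first case holds. -/
theorem stmt_15 (N : ℕ) (Z F : Finset (Fin N → ℤ))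
    (hpos : IsPositive N Z) (hcard : Z.card = N)
    (hF : IsAdaptedBasis N F Z)
    (hform : ∀ z ∈ Z, ∃ f1 ∈ F, ∃ f2 ∈ F, ∃ f3 ∈ F,
      f1 ≠ f2 ∧ f1 ≠ f3 ∧ f2 ≠ f3 ∧ z = f1 - f2 - f3)
    (hhit1 : ∀ f ∈ F, (Z.filter fun z => negForm N z f = -1).card = 1)
    (hhit2 : ∀ f ∈ F, (Z.filter fun z => negForm N z f = 1).card = 2)
    (u v : Fin N → ℤ) (hu : u ∈ Z) (hv : v ∈ Z)
    (huv : negForm N u v = 1) :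
    (∃ p q : Fin N → ℤ, ((p, q) = (u, v) ∨ (p, q) = (v, u)) ∧
      (((F.filter fun f => negForm N p f ≠ 0 ∧ negForm N q f ≠ 0).card = 1 ∧
        ∃ f : Fin 5 → (Fin N → ℤ), Function.Injective f ∧ (∀ j, f j ∈ F) ∧
          p = f 0 - f 1 - f 2 ∧ q = f 2 - f 3 - f 4) ∨
      ((F.filter fun f => negForm N p f ≠ 0 ∧ negForm N q f ≠ 0).card = 3 ∧
        ∃ f : Fin 3 → (Fin N → ℤ), Function.Injective f ∧ (∀ j, f j ∈ F) ∧
          p = f 0 - f 1 - f 2 ∧ q = f 2 - f 0 - f 1))) ∧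
    (3 < (compOf N Z u).card →
      ∃ p q : Fin N → ℤ, ((p, q) = (u, v) ∨ (p, q) = (v, u)) ∧
        (F.filter fun f => negForm N p f ≠ 0 ∧ negForm N q f ≠ 0).card = 1 ∧
        ∃ f : Fin 5 → (Fin N → ℤ), Function.Injective f ∧ (∀ j, f j ∈ F) ∧
          p = f 0 - f 1 - f 2 ∧ q = f 2 - f 3 - f 4) := by
  classical
  obtain ⟨hE, -⟩ := hF
  obtain ⟨f1, m1, f2, m2, f3, m3, d12, d13, d23, hu_eq⟩ := hform u hu
  obtain ⟨g1, k1, g2, k2, g3, k3, e12, e13, e23, hv_eq⟩ := hform v hv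
  have key := huv
  rw [hu_eq, hv_eq, zz_pair hE m1 m2 m3 k1 k2 k3] at key
  have main : (∃ p q : Fin N → ℤ, ((p, q) = (u, v) ∨ (p, q) = (v, u)) ∧
      (((F.filter fun f => negForm N p f ≠ 0 ∧ negForm N q f ≠ 0).card = 1 ∧
        ∃ f : Fin 5 → (Fin N → ℤ), Function.Injective f ∧ (∀ j, f j ∈ F) ∧
          p = f 0 - f 1 - f 2 ∧ q = f 2 - f 3 - f 4) ∨
      ((F.filter fun f => negForm N p f ≠ 0 ∧ negForm N q f ≠ 0).card = 3 ∧
        ∃ f : Fin 3 → (Fin N → ℤ), Function.Injective f ∧ (∀ j, f j ∈ F) ∧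
          p = f 0 - f 1 - f 2 ∧ q = f 2 - f 0 - f 1))) := by
    by_cases h12 : f1 = g2
    · subst h12
      by_cases h21 : f2 = g1
      · subst h21
        by_cases t33 : f3 = g3
        · subst t33
          exact ⟨u, v, Or.inl rfl, Or.inr (caseC3 hE m1 m3 m2 d13 d12 (Ne.symm d23)
            (hu_eq.trans (sub_right_comm _ _ _)) hv_eq)⟩
        · exfalso
          rw [if_neg d12, if_pos (rfl : f1 = f1), if_neg e23, if_pos (rfl : f2 = f2),
            if_neg (Ne.symm d12), if_neg e13, if_neg (Ne.symm d23), if_neg (Ne.symm d13),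
            if_neg t33] at key
          omega
      · by_cases h31 : f3 = g1
        · subst h31
          by_cases t23 : f2 = g3
          · subst t23
            exact ⟨u, v, Or.inl rfl, Or.inr (caseC3 hE m1 m2 m3 d12 d13 d23 hu_eq hv_eq)⟩
          · exfalso
            rw [if_neg d13, if_pos (rfl : f1 = f1), if_neg e23, if_neg h21,
              if_neg (Ne.symm d12), if_neg t23, if_pos (rfl : f3 = f3), if_neg e12,
              if_neg e13] at key
            omega
        · by_cases t23 : f2 = g3
          · exfalso
            rw [if_neg (Ne.symm e12), if_pos (rfl : f1 = f1), if_neg e23, if_neg h21,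
              if_neg (Ne.symm d12), if_pos t23, if_neg h31, if_neg (Ne.symm d13),
              if_neg (show f3 ≠ g3 from fun h => d23 (t23.trans h.symm))] at key
            omega
          · by_cases t33 : f3 = g3
            · exfalso
              rw [if_neg (Ne.symm e12), if_pos (rfl : f1 = f1), if_neg e23, if_neg h21,
                if_neg (Ne.symm d12), if_neg t23, if_neg h31, if_neg (Ne.symm d13),
                if_pos t33] at key
              omega
            · exact ⟨v, u, Or.inr rfl, Or.inl (caseC1 hE k1 k3 m1 m2 m3 e13 e12
                (Ne.symm h21) (Ne.symm h31) (Ne.symm e23) (Ne.symm t23) (Ne.symm t33)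
                d12 d13 d23 (hv_eq.trans (sub_right_comm _ _ _)) hu_eq)⟩
    · by_cases h13 : f1 = g3
      · subst h13
        by_cases h21 : f2 = g1
        · subst h21
          by_cases t32 : f3 = g2
          · subst t32
            exact ⟨v, u, Or.inr rfl, Or.inr (caseC3 hE m2 m3 m1 d23 (Ne.symm d12)
              (Ne.symm d13) hv_eq hu_eq)⟩
          · exfalso
            rw [if_neg d12, if_neg h12, if_pos (rfl : f1 = f1),
              if_pos (rfl : f2 = f2), if_neg e12, if_neg (Ne.symm d12),
              if_neg (Ne.symm d23), if_neg t32, if_neg (Ne.symm d13)] at key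
            omega
        · by_cases h31 : f3 = g1
          · subst h31
            by_cases t22 : f2 = g2
            · subst t22
              exact ⟨u, v, Or.inl rfl, Or.inr (caseC3 hE m1 m2 m3 d12 d13 d23 hu_eq
                (hv_eq.trans (sub_right_comm _ _ _)))⟩
            · exfalso
              rw [if_neg d13, if_neg h12, if_pos (rfl : f1 = f1), if_neg h21, if_neg t22,
                if_neg (Ne.symm d12), if_pos (rfl : f3 = f3), if_neg e12,
                if_neg (Ne.symm d13)] at key
              omega
          · by_cases t22 : f2 = g2
            · exfalso
              rw [if_neg (Ne.symm e13), if_neg h12, if_pos (rfl : f1 = f1), if_neg h21,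
                if_pos t22, if_neg (Ne.symm d12), if_neg h31,
                if_neg (show f3 ≠ g2 from fun h => d23 (t22.trans h.symm)),
                if_neg (Ne.symm d13)] at key
              omega
            · by_cases t32 : f3 = g2
              · exfalso
                rw [if_neg (Ne.symm e13), if_neg h12, if_pos (rfl : f1 = f1), if_neg h21,
                  if_neg t22, if_neg (Ne.symm d12), if_neg h31, if_pos t32,
                  if_neg (Ne.symm d13)] at key
                omega
              · exact ⟨v, u, Or.inr rfl, Or.inl (caseC1 hE k1 k2 m1 m2 m3 e12 e13
                  (Ne.symm h21) (Ne.symm h31) e23 (Ne.symm t22) (Ne.symm t32)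
                  d12 d13 d23 hv_eq hu_eq)⟩
      · by_cases h21 : f2 = g1
        · subst h21
          by_cases t32 : f3 = g2
          · exfalso
            rw [if_neg d12, if_neg h12, if_neg h13, if_pos (rfl : f2 = f2), if_neg e12,
              if_neg e13, if_neg (Ne.symm d23), if_pos t32,
              if_neg (show f3 ≠ g3 from fun h => e23 (t32.symm.trans h))] at key
            omega
          · by_cases t33 : f3 = g3
            · exfalso
              rw [if_neg d12, if_neg h12, if_neg h13, if_pos (rfl : f2 = f2), if_neg e12,
                if_neg e13, if_neg (Ne.symm d23), if_neg t32, if_pos t33] at key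
              omega
            · exact ⟨u, v, Or.inl rfl, Or.inl (caseC1 hE m1 m3 m2 k2 k3 d13 d12 h12 h13
                (Ne.symm d23) t32 t33 e12 e13 e23
                (hu_eq.trans (sub_right_comm _ _ _)) hv_eq)⟩
        · by_cases h31 : f3 = g1
          · subst h31
            by_cases t22 : f2 = g2
            · exfalso
              rw [if_neg d13, if_neg h12, if_neg h13, if_neg h21, if_pos t22,
                if_neg (show f2 ≠ g3 from fun h => e23 (t22.symm.trans h)),
                if_pos (rfl : f3 = f3), if_neg e12, if_neg e13] at key
              omega
            · by_cases t23 : f2 = g3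
              · exfalso
                rw [if_neg d13, if_neg h12, if_neg h13, if_neg h21, if_neg t22,
                  if_pos t23, if_pos (rfl : f3 = f3), if_neg e12, if_neg e13] at key
                omega
              · exact ⟨u, v, Or.inl rfl, Or.inl (caseC1 hE m1 m2 m3 k2 k3 d12 d13 h12
                  h13 d23 t22 t23 e12 e13 e23 hu_eq hv_eq)⟩
          · exfalso
            rw [if_neg h12, if_neg h13, if_neg h21, if_neg h31] at key
            split_ifs at key <;> omega
  refine ⟨main, fun hgt => ?_⟩
  obtain ⟨p, q, hpq, hcase⟩ := main
  rcases hcase with h1 | h3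
  · exact ⟨p, q, hpq, h1⟩
  · exfalso
    obtain ⟨hc3, f, hfinj, hfF, hpf, hqf⟩ := h3
    have hmem : (p = u ∧ q = v) ∨ (p = v ∧ q = u) := by
      rcases hpq with h | h
      · exact Or.inl ⟨congrArg Prod.fst h, congrArg Prod.snd h⟩
      · exact Or.inr ⟨congrArg Prod.fst h, congrArg Prod.snd h⟩
    have hpZ : p ∈ Z := by rcases hmem with ⟨h, -⟩ | ⟨h, -⟩ <;> rw [h] <;> assumption
    have hqZ : q ∈ Z := by rcases hmem with ⟨-, h⟩ | ⟨-, h⟩ <;> rw [h] <;> assumption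
    have hw : u = p ∨ u = q := by
      rcases hmem with ⟨h, -⟩ | ⟨-, h⟩
      · exact Or.inl h.symm
      · exact Or.inr h.symm
    have := comp_small hpos hE hform hhit1 hhit2 (hfF 0) (hfF 1) (hfF 2)
      (hfinj.ne (by decide)) (hfinj.ne (by decide)) (hfinj.ne (by decide))
      hpZ hqZ hpf hqf u hw
    omega
end
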